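/- arXiv:2405.07382 — 4 statements merged into one kernel-verified Lean document; each statement's English description precedes it below -/
import Mathlib

section
/- Let H be a bipartite multigraph with bipartition (X, Y). If M₁ is a matching saturating a set X₁ ⊆ X and M₂ is a matching saturating a set Y₂ ⊆ Y, then H has a matching saturating both X₁ and Y₂. -/
/-- The set of `M₁`-edges forced into the final matching: edges at an `X₁`-vertex
with no `M₂`-edge, propagated forward along alternating paths. -/
inductive InS {X Y E : Type*} (fx : E → X) (fy : E → Y)
    (M₁ M₂ : Set E) (X₁ : Set X) : E → Prop
  | base (e : E) (he : e ∈ M₁) (hx : fx e ∈ X₁)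
      (hno : ∀ f ∈ M₂, fx f ≠ fx e) : InS fx fy M₁ M₂ X₁ e
  | step (e f e' : E) (he : InS fx fy M₁ M₂ X₁ e) (hf : f ∈ M₂)
      (hfy : fy f = fy e) (he' : e' ∈ M₁) (hfx : fx e' = fx f) :
      InS fx fy M₁ M₂ X₁ e'

lemma InS.mem_M₁ {X Y E : Type*} {fx : E → X} {fy : E → Y}
    {M₁ M₂ : Set E} {X₁ : Set X} {e : E}
    (h : InS fx fy M₁ M₂ X₁ e) : e ∈ M₁ := by
  cases h with
  | base e he hx hno => exact he
  | step e f e' he hf hfy he' hfx => exact he'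

/-- Key invariant: if an `M₂`-edge `f` shares its `X`-endpoint with some edge of `S`,
then some edge of `S` covers the `Y`-endpoint of `f`. -/
lemma InS.invA {X Y E : Type*} {fx : E → X} {fy : E → Y}
    {M₁ M₂ : Set E} {X₁ : Set X}
    (hM₂ : ∀ e ∈ M₂, ∀ f ∈ M₂, e ≠ f → fx e ≠ fx f ∧ fy e ≠ fy f)
    {e : E} (h : InS fx fy M₁ M₂ X₁ e) :
    ∀ f ∈ M₂, fx f = fx e → ∃ e₀, InS fx fy M₁ M₂ X₁ e₀ ∧ fy e₀ = fy f := by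
  induction h with
  | base e he hx hno =>
    intro f hf hfx
    exact absurd hfx (hno f hf)
  | step e f₁ e' he hf₁ hfy he' hfx ih =>
    intro f hf hfx'
    have hff₁ : f = f₁ := by
      by_contra hne
      exact (hM₂ f hf f₁ hf₁ hne).1 (hfx'.trans hfx)
    exact ⟨e, he, by rw [hff₁, hfy]⟩

/-- In a bipartite multigraph with bipartition `(X, Y)` (edges indexed by `E`, with
endpoint maps `fx`, `fy`), if a matching `M₁` saturates `X₁ ⊆ X` and a matching `M₂`
saturates `Y₂ ⊆ Y`, then there is a matching saturating both `X₁` and `Y₂`. -/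
theorem bipartite_multigraph_matching_saturating_both
    {X Y E : Type*} (fx : E → X) (fy : E → Y)
    (M₁ M₂ : Set E) (X₁ : Set X) (Y₂ : Set Y)
    (hM₁ : ∀ e ∈ M₁, ∀ f ∈ M₁, e ≠ f → fx e ≠ fx f ∧ fy e ≠ fy f)
    (hM₂ : ∀ e ∈ M₂, ∀ f ∈ M₂, e ≠ f → fx e ≠ fx f ∧ fy e ≠ fy f)
    (hX₁ : ∀ x ∈ X₁, ∃ e ∈ M₁, fx e = x)
    (hY₂ : ∀ y ∈ Y₂, ∃ e ∈ M₂, fy e = y) :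
    ∃ M : Set E,
      (∀ e ∈ M, ∀ f ∈ M, e ≠ f → fx e ≠ fx f ∧ fy e ≠ fy f) ∧
      (∀ x ∈ X₁, ∃ e ∈ M, fx e = x) ∧ (∀ y ∈ Y₂, ∃ e ∈ M, fy e = y) := by
  classical
  set S : Set E := {e | InS fx fy M₁ M₂ X₁ e} with hS
  set B : Set E := {f | f ∈ M₂ ∧ ∀ e ∈ S, fx f ≠ fx e ∧ fy f ≠ fy e} with hB
  refine ⟨S ∪ B, ?_, ?_, ?_⟩
  · -- matching property
    rintro e (he | he) f (hf | hf) hne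
    · exact hM₁ e he.mem_M₁ f hf.mem_M₁ hne
    · have := hf.2 e he
      exact ⟨this.1.symm, this.2.symm⟩
    · exact he.2 f hf
    · exact hM₂ e he.1 f hf.1 hne
  · -- saturates X₁
    intro x hx
    obtain ⟨e, he, hex⟩ := hX₁ x hx
    by_cases h : ∃ f ∈ M₂, fx f = fx e
    · obtain ⟨f, hf, hfx⟩ := h
      by_cases hfB : f ∈ B
      · exact ⟨f, Or.inr hfB, hfx.trans hex⟩
      · -- f conflicts with some edge of S
        have : ∃ e₀ ∈ S, fx f = fx e₀ ∨ fy f = fy e₀ := by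
          by_contra hcon
          push_neg at hcon
          exact hfB ⟨hf, fun e₀ he₀ => hcon e₀ he₀⟩
        obtain ⟨e₀, he₀, hcase⟩ := this
        rcases hcase with hxx | hyy
        · have hee : e₀ = e := by
            by_contra hne
            exact (hM₁ e₀ he₀.mem_M₁ e he hne).1 (hxx.symm.trans hfx)
          exact ⟨e, Or.inl (hee ▸ he₀), hex⟩
        · have : e ∈ S := InS.step e₀ f e he₀ hf hyy he hfx.symm
          exact ⟨e, Or.inl this, hex⟩
    · push_neg at h
      have : e ∈ S := InS.base e he (hex ▸ hx) h
      exact ⟨e, Or.inl this, hex⟩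
  · -- saturates Y₂
    intro y hy
    obtain ⟨f, hf, hfy⟩ := hY₂ y hy
    by_cases hfB : f ∈ B
    · exact ⟨f, Or.inr hfB, hfy⟩
    · have : ∃ e₀ ∈ S, fx f = fx e₀ ∨ fy f = fy e₀ := by
        by_contra hcon
        push_neg at hcon
        exact hfB ⟨hf, fun e₀ he₀ => hcon e₀ he₀⟩
      obtain ⟨e₀, he₀, hcase⟩ := this
      rcases hcase with hxx | hyy
      · obtain ⟨e₁, he₁, he₁y⟩ := he₀.invA hM₂ f hf hxx
        exact ⟨e₁, Or.inl he₁, he₁y.trans hfy⟩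
      · exact ⟨e₀, Or.inl he₀, hyy.symm.trans hfy⟩
end

section
/- Let G be a graph, F ⊆ E(G), and k ≥ Δ(G) an integer. If G has a proper k-edge-coloring in which all edges of F receive pairwise distinct colors, then G has a proper k-edge-coloring φ in which all edges of F receive distinct colors and, for any two colors i, j ∈ {1,…,k}, the numbers of vertices missing i and missing j differ by at most 5. -/
/-!
Among the proper colourings that are rainbow on `F`, take one minimising `∑ₗ #(missing l)²`.
Suppose colour `j` is missing at six more vertices than colour `i`, and consider the subgraph of
edges coloured `i` or `j`. Its components are paths and cycles, so each contains at most two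
vertices missing `j`. Summed over the components, the number of vertices missing `j` minus the
number missing `i` is at least six, each component contributes at most two, and at most two
components contain an edge of `F` coloured `i` or `j`; so some other component has a positive
surplus. Swapping `i` and `j` on it (a Kempe change) keeps the colouring proper and rainbow on
`F` and strictly decreases the potential.
-/

open Finset

namespace SimpleGraph

variable {V : Type*} {G : SimpleGraph V}

theorem Connected.card_filter_degree_le_one_le_two [Fintype V] [DecidableRel G.Adj]
    (hG : G.Connected) (hdeg : ∀ v, G.degree v ≤ 2) : #{v | G.degree v ≤ 1} ≤ 2 := by
  classical
  have hedges := hG.card_vert_le_card_edgeSet_add_one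
  rw [Nat.card_eq_fintype_card, Nat.card_eq_fintype_card, ← edgeFinset_card] at hedges
  have hsum : ∑ v, G.degree v + #{v | G.degree v ≤ 1} ≤ 2 * Fintype.card V :=
    calc ∑ v, G.degree v + #{v | G.degree v ≤ 1}
        = ∑ v, (G.degree v + if G.degree v ≤ 1 then 1 else 0) := by
          rw [sum_add_distrib, card_filter]
      _ ≤ ∑ _v : V, 2 := sum_le_sum fun v _ => by have := hdeg v; split_ifs <;> omega
      _ = 2 * Fintype.card V := by rw [sum_const, card_univ, smul_eq_mul, mul_comm]
  have := G.sum_degrees_eq_twice_card_edges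
  omega

theorem ConnectedComponent.card_filter_degree_le_one_le_two [Fintype V] [DecidableEq V]
    [DecidableRel G.Adj] (hdeg : ∀ v, G.degree v ≤ 2) (C : G.ConnectedComponent) :
    #{v ∈ C.supp.toFinset | G.degree v ≤ 1} ≤ 2 := by
  have hdegC (x : C.supp) : (G.induce C.supp).degree x = G.degree x :=
    degree_induce_of_neighborSet_subset fun _ hw => C.mem_supp_of_adj_mem_supp x.2 hw
  have hsurj : Set.SurjOn Subtype.val
      (({x | (G.induce C.supp).degree x ≤ 1} : Finset C.supp) : Set C.supp)
      ({v ∈ C.supp.toFinset | G.degree v ≤ 1} : Finset V) := fun v hv => by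
    simp only [coe_filter, Set.mem_toFinset] at hv
    exact ⟨⟨v, hv.1⟩, by simpa [hdegC] using hv.2, rfl⟩
  exact (card_le_card_of_surjOn _ hsurj).trans
    (Connected.card_filter_degree_le_one_le_two C.connected_toSimpleGraph
      fun x => hdegC x ▸ hdeg x)

theorem card_eq_sum_card_inter_supp [Fintype V] [DecidableEq V] [DecidableRel G.Adj]
    (s : Finset V) : #s = ∑ C : G.ConnectedComponent, #(s ∩ C.supp.toFinset) := by
  classical
  rw [card_eq_sum_card_fiberwise (f := G.connectedComponentMk) (t := univ) fun _ _ => mem_univ _]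
  congr! 2 with C
  ext v
  simp [ConnectedComponent.mem_supp_iff]

variable {k : ℕ}

variable (G) in
def IsProperEdgeColoring (c : Sym2 V → Fin k) : Prop :=
  ∀ u v w, G.Adj u v → G.Adj u w → v ≠ w → c s(u, v) ≠ c s(u, w)

variable (G) in
def kempeGraph (c : Sym2 V → Fin k) (i j : Fin k) : SimpleGraph V where
  Adj u v := G.Adj u v ∧ (c s(u, v) = i ∨ c s(u, v) = j)
  symm := ⟨fun u _ h => ⟨h.1.symm, Sym2.eq_swap (a := u) ▸ h.2⟩⟩
  loopless := ⟨fun v h => G.loopless.irrefl v h.1⟩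

open Classical in
/-- A Kempe change when `S` is closed under the edges of `G.kempeGraph c i j`. -/
noncomputable def kempeSwap (c : Sym2 V → Fin k) (i j : Fin k) (S : Finset V) :
    Sym2 V → Fin k :=
  fun e => if ∃ v ∈ e, v ∈ S then Equiv.swap i j (c e) else c e

variable {c : Sym2 V → Fin k} {i j : Fin k}

theorem connectedComponentMk_kempeGraph_eq_of_mem {e : Sym2 V} (he : e ∈ G.edgeSet)
    (hce : c e = i ∨ c e = j) {v w : V} (hv : v ∈ e) (hw : w ∈ e) :
    (G.kempeGraph c i j).connectedComponentMk v = (G.kempeGraph c i j).connectedComponentMk w := by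
  induction e using Sym2.ind with
  | _ a b =>
    have hab : (G.kempeGraph c i j).connectedComponentMk a =
        (G.kempeGraph c i j).connectedComponentMk b :=
      ConnectedComponent.connectedComponentMk_eq_of_adj ⟨he, hce⟩
    rcases Sym2.mem_iff.1 hv with rfl | rfl <;> rcases Sym2.mem_iff.1 hw with rfl | rfl <;>
      simp [hab]

theorem kempeSwap_apply_eq_self {S : Finset V} {e : Sym2 V}
    (he : c e = i ∨ c e = j → ∀ v ∈ e, v ∉ S) : kempeSwap c i j S e = c e := by
  by_cases hce : c e = i ∨ c e = j
  · simp only [kempeSwap, ite_eq_right_iff]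
    rintro ⟨v, hv, hvS⟩
    exact absurd hvS (he hce v hv)
  · push Not at hce
    simp [kempeSwap, Equiv.swap_apply_of_ne_of_ne hce.1 hce.2]

variable [DecidableEq V] {S : Finset V}

theorem kempeSwap_mk_of_adj (hS : ∀ u v, (G.kempeGraph c i j).Adj u v → u ∈ S → v ∈ S)
    {u v : V} (huv : G.Adj u v) :
    kempeSwap c i j S s(u, v) = if u ∈ S then Equiv.swap i j (c s(u, v)) else c s(u, v) := by
  by_cases hu : u ∈ S
  · simp [kempeSwap, hu]
  by_cases hv : v ∈ S
  · have hcuv : c s(u, v) ≠ i ∧ c s(u, v) ≠ j := by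
      by_contra h
      refine hu (hS v u ⟨huv.symm, ?_⟩ hv)
      rw [Sym2.eq_swap]
      tauto
    simp [kempeSwap, hu, Equiv.swap_apply_of_ne_of_ne hcuv.1 hcuv.2]
  · simp [kempeSwap, hu, hv]

theorem IsProperEdgeColoring.kempeSwap (hc : G.IsProperEdgeColoring c)
    (hS : ∀ u v, (G.kempeGraph c i j).Adj u v → u ∈ S → v ∈ S) :
    G.IsProperEdgeColoring (kempeSwap c i j S) := by
  intro u v w huv huw hvw
  rw [kempeSwap_mk_of_adj hS huv, kempeSwap_mk_of_adj hS huw]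
  split_ifs
  · exact (Equiv.injective _).ne (hc u v w huv huw hvw)
  · exact hc u v w huv huw hvw

variable [Fintype V] [DecidableRel G.Adj]

variable (G) in
/-- The set `φ̄⁻¹(l)` of the paper. -/
def missingVerts (c : Sym2 V → Fin k) (l : Fin k) : Finset V :=
  {v | ∀ w, G.Adj v w → c s(v, w) ≠ l}

instance (c : Sym2 V → Fin k) (i j : Fin k) : DecidableRel (G.kempeGraph c i j).Adj :=
  fun _ _ => inferInstanceAs (Decidable (_ ∧ _))

theorem mem_missingVerts_kempeSwap
    (hS : ∀ u v, (G.kempeGraph c i j).Adj u v → u ∈ S → v ∈ S) {v : V} {l : Fin k} :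
    v ∈ G.missingVerts (kempeSwap c i j S) l ↔
      v ∈ G.missingVerts c (if v ∈ S then Equiv.swap i j l else l) := by
  simp only [missingVerts, mem_filter, mem_univ, true_and]
  refine forall_congr' fun w => imp_congr_right fun hvw => ?_
  rw [kempeSwap_mk_of_adj hS hvw]
  split_ifs
  · exact not_congr Equiv.swap_apply_eq_iff
  · rfl

theorem card_missingVerts_kempeSwap
    (hS : ∀ u v, (G.kempeGraph c i j).Adj u v → u ∈ S → v ∈ S) (l : Fin k) :
    #(G.missingVerts (kempeSwap c i j S) l) =
      #(G.missingVerts c (Equiv.swap i j l) ∩ S) + #(G.missingVerts c l \ S) := by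
  rw [← card_inter_add_card_sdiff _ S]
  congr 2 <;> ext v <;> by_cases hv : v ∈ S <;> simp [mem_missingVerts_kempeSwap hS, hv]

theorem degree_kempeGraph_le_card (hc : G.IsProperEdgeColoring c) (v : V) (s : Finset (Fin k))
    (hs : ∀ w, (G.kempeGraph c i j).Adj v w → c s(v, w) ∈ s) :
    (G.kempeGraph c i j).degree v ≤ #s := by
  rw [← card_neighborFinset_eq_degree]
  refine card_le_card_of_injOn (fun w => c s(v, w))
    (fun w hw => hs w ((mem_neighborFinset ..).1 hw)) fun w hw w' hw' hcw => ?_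
  by_contra hne
  exact hc v w w' ((mem_neighborFinset ..).1 hw).1 ((mem_neighborFinset ..).1 hw').1 hne hcw

theorem degree_kempeGraph_le_two (hc : G.IsProperEdgeColoring c) (v : V) :
    (G.kempeGraph c i j).degree v ≤ 2 :=
  (degree_kempeGraph_le_card hc v {i, j} fun _ hw => by simpa using hw.2).trans card_le_two

theorem degree_kempeGraph_le_one_of_mem_missingVerts (hc : G.IsProperEdgeColoring c) {v : V}
    (hv : v ∈ G.missingVerts c j) : (G.kempeGraph c i j).degree v ≤ 1 :=
  degree_kempeGraph_le_card hc v {i} fun w hw => by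
    simp only [missingVerts, mem_filter, mem_univ, true_and] at hv
    simpa using hw.2.resolve_right (hv w hw.1)

theorem card_missingVerts_inter_supp_le_two (hc : G.IsProperEdgeColoring c)
    (C : (G.kempeGraph c i j).ConnectedComponent) :
    #(G.missingVerts c j ∩ C.supp.toFinset) ≤ 2 :=
  (card_le_card fun v hv => by
    rw [mem_inter] at hv
    exact mem_filter.2 ⟨hv.2, degree_kempeGraph_le_one_of_mem_missingVerts hc hv.1⟩).trans
  (C.card_filter_degree_le_one_le_two (degree_kempeGraph_le_two hc))

theorem exists_connectedComponent_kempeGraph {F : Finset (Sym2 V)}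
    (hc : G.IsProperEdgeColoring c) (hF : Set.InjOn c F) (hFG : F ⊆ G.edgeFinset)
    (hij : #(G.missingVerts c i) + 6 ≤ #(G.missingVerts c j)) :
    ∃ C : (G.kempeGraph c i j).ConnectedComponent,
      (∀ e ∈ F, c e = i ∨ c e = j → ∀ v ∈ e, v ∉ C.supp) ∧
      #(G.missingVerts c i ∩ C.supp.toFinset) < #(G.missingVerts c j ∩ C.supp.toFinset) := by
  classical
  set H := G.kempeGraph c i j
  set surplus : H.ConnectedComponent → ℤ := fun C =>
    #(G.missingVerts c j ∩ C.supp.toFinset) - #(G.missingVerts c i ∩ C.supp.toFinset)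
  have htotal : 6 ≤ ∑ C, surplus C := by
    simp only [surplus, sum_sub_distrib]
    rw [← Nat.cast_sum, ← Nat.cast_sum, ← card_eq_sum_card_inter_supp,
      ← card_eq_sum_card_inter_supp]
    omega
  set bad := {e ∈ F | c e = i ∨ c e = j}.image fun e => H.connectedComponentMk e.out.1
  have hbad : #bad ≤ 2 := by
    refine card_image_le.trans <| (card_le_card_of_injOn c (t := {i, j}) ?_ ?_).trans card_le_two
    · intro e he
      simpa using (mem_filter.1 he).2
    · exact hF.mono (coe_subset.2 (filter_subset _ _))
  have hsurplus_bad : ∑ C ∈ bad, surplus C ≤ 4 := by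
    refine (sum_le_card_nsmul _ _ 2 fun C _ => ?_).trans ?_
    · have := card_missingVerts_inter_supp_le_two hc C
      simp only [surplus]
      omega
    · simp only [nsmul_eq_mul]
      norm_cast
      omega
  obtain ⟨C, hC, hsurplus⟩ : ∃ C ∈ univ \ bad, (0 : ℤ) < surplus C := by
    refine exists_lt_of_sum_lt ?_
    rw [sum_const_zero]
    have := sum_sdiff (subset_univ bad) (f := surplus)
    linarith
  refine ⟨C, fun e he hce v hv hvC => (mem_sdiff.1 hC).2 ?_, by
    simp only [surplus] at hsurplus; omega⟩
  refine mem_image.2 ⟨e, mem_filter.2 ⟨he, hce⟩, ?_⟩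
  rw [← (ConnectedComponent.mem_supp_iff _ _).1 hvC]
  exact connectedComponentMk_kempeGraph_eq_of_mem (mem_edgeFinset.1 (hFG he)) hce
    (Sym2.out_fst_mem e) hv

variable (G) in
def missingPotential (c : Sym2 V → Fin k) : ℕ := ∑ l, #(G.missingVerts c l) ^ 2

theorem exists_missingPotential_lt {F : Finset (Sym2 V)} (hc : G.IsProperEdgeColoring c)
    (hF : Set.InjOn c F) (hFG : F ⊆ G.edgeFinset)
    (hij : #(G.missingVerts c i) + 6 ≤ #(G.missingVerts c j)) :
    ∃ c' : Sym2 V → Fin k, G.IsProperEdgeColoring c' ∧ Set.InjOn c' F ∧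
      G.missingPotential c' < G.missingPotential c := by
  obtain ⟨C, hCF, hCsurplus⟩ := exists_connectedComponent_kempeGraph hc hF hFG hij
  set S := C.supp.toFinset
  have hS : ∀ u v, (G.kempeGraph c i j).Adj u v → u ∈ S → v ∈ S := fun u v huv hu => by
    simpa [S] using C.mem_supp_of_adj_mem_supp (by simpa [S] using hu) huv
  have hne : i ≠ j := by rintro rfl; omega
  refine ⟨kempeSwap c i j S, hc.kempeSwap hS,
    hF.congr fun e he => (kempeSwap_apply_eq_self fun hce v hv => ?_).symm, ?_⟩
  · simpa [S] using hCF e he hce v hv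
  have hcard_i := card_missingVerts_kempeSwap hS i
  have hcard_j := card_missingVerts_kempeSwap hS j
  rw [Equiv.swap_apply_left] at hcard_i
  rw [Equiv.swap_apply_right] at hcard_j
  have hcard_other : ∀ l ∈ ({i, j} : Finset (Fin k))ᶜ,
      #(G.missingVerts (kempeSwap c i j S) l) ^ 2 = #(G.missingVerts c l) ^ 2 := fun l hl => by
    simp only [mem_compl, mem_insert, mem_singleton, not_or] at hl
    rw [card_missingVerts_kempeSwap hS, Equiv.swap_apply_of_ne_of_ne hl.1 hl.2,
      card_inter_add_card_sdiff]
  have hsplit_i := card_inter_add_card_sdiff (G.missingVerts c i) S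
  have hsplit_j := card_inter_add_card_sdiff (G.missingVerts c j) S
  have hle_two := card_missingVerts_inter_supp_le_two hc C
  unfold missingPotential
  rw [← sum_add_sum_compl {i, j},
    ← sum_add_sum_compl {i, j} (fun l => #(G.missingVerts c l) ^ 2),
    sum_pair hne, sum_pair hne, sum_congr rfl hcard_other, hcard_i, hcard_j]
  gcongr ?_ + _
  nlinarith

theorem exists_isProperEdgeColoring_card_missingVerts_le {F : Finset (Sym2 V)}
    (hFG : F ⊆ G.edgeFinset) {c₀ : Sym2 V → Fin k} (hc₀ : G.IsProperEdgeColoring c₀)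
    (hF₀ : Set.InjOn c₀ F) :
    ∃ c : Sym2 V → Fin k, G.IsProperEdgeColoring c ∧ Set.InjOn c F ∧
      ∀ i j, #(G.missingVerts c j) ≤ #(G.missingVerts c i) + 5 := by
  obtain ⟨c, ⟨hc, hF⟩, hmin⟩ := (measure G.missingPotential).wf.has_min
    {c | G.IsProperEdgeColoring c ∧ Set.InjOn c F} ⟨c₀, hc₀, hF₀⟩
  refine ⟨c, hc, hF, fun i j => ?_⟩
  by_contra! hij
  obtain ⟨c', hc', hF', hlt⟩ :=
    exists_missingPotential_lt hc hF hFG (i := i) (j := j) (by omega)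
  exact hmin c' ⟨hc', hF'⟩ hlt

end SimpleGraph

open SimpleGraph in
theorem weakly_equitable_edge_coloring_general {V : Type*} [Fintype V] [DecidableEq V]
    (G : SimpleGraph V) [DecidableRel G.Adj] (k : ℕ)
    (F : Finset (Sym2 V)) (hF : F ⊆ G.edgeFinset)
    (c₀ : Sym2 V → Fin k)
    (hp₀ : ∀ u v w, G.Adj u v → G.Adj u w → v ≠ w → c₀ s(u, v) ≠ c₀ s(u, w))
    (hd₀ : ∀ e ∈ F, ∀ f ∈ F, e ≠ f → c₀ e ≠ c₀ f) :
    ∃ c : Sym2 V → Fin k,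
      (∀ u v w, G.Adj u v → G.Adj u w → v ≠ w → c s(u, v) ≠ c s(u, w)) ∧
      (∀ e ∈ F, ∀ f ∈ F, e ≠ f → c e ≠ c f) ∧
      ∀ i j : Fin k,
        |((Finset.univ.filter fun v => ∀ w, G.Adj v w → c s(v, w) ≠ i).card : ℤ)
          - ((Finset.univ.filter fun v => ∀ w, G.Adj v w → c s(v, w) ≠ j).card : ℤ)| ≤ 5 := by
  have hinj₀ : Set.InjOn c₀ F := fun e he f hf hef => by_contra fun hne => hd₀ e he f hf hne hef
  obtain ⟨c, hc, hinj, hbal⟩ := exists_isProperEdgeColoring_card_missingVerts_le hF hp₀ hinj₀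
  refine ⟨c, hc, fun e he f hf hne hef => hne (hinj he hf hef), fun i j => abs_sub_le_iff.2 ?_⟩
  have hij := hbal i j
  have hji := hbal j i
  unfold missingVerts at hij hji
  constructor <;> omega

/-- If `G` has a proper `k`-edge-coloring (`k ≥ Δ(G)`) in which all edges of `F` get
distinct colors, then it has such a coloring in which, in addition, the numbers of
vertices missing any two colors differ by at most `5`. -/
theorem weakly_equitable_edge_coloring {V : Type*} [Fintype V] [DecidableEq V]
    (G : SimpleGraph V) [DecidableRel G.Adj] (k : ℕ) (hk : G.maxDegree ≤ k)
    (F : Finset (Sym2 V)) (hF : F ⊆ G.edgeFinset)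
    (c₀ : Sym2 V → Fin k)
    (hp₀ : ∀ u v w, G.Adj u v → G.Adj u w → v ≠ w → c₀ s(u, v) ≠ c₀ s(u, w))
    (hd₀ : ∀ e ∈ F, ∀ f ∈ F, e ≠ f → c₀ e ≠ c₀ f) :
    ∃ c : Sym2 V → Fin k,
      (∀ u v w, G.Adj u v → G.Adj u w → v ≠ w → c s(u, v) ≠ c s(u, w)) ∧
      (∀ e ∈ F, ∀ f ∈ F, e ≠ f → c e ≠ c f) ∧
      ∀ i j : Fin k,
        |((Finset.univ.filter fun v => ∀ w, G.Adj v w → c s(v, w) ≠ i).card : ℤ)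
          - ((Finset.univ.filter fun v => ∀ w, G.Adj v w → c s(v, w) ≠ j).card : ℤ)| ≤ 5 :=
  weakly_equitable_edge_coloring_general G k F hF c₀ hp₀ hd₀
end

section
/- Let G be a graph on 2n vertices (n sufficiently large) and N = {x₁,y₁,…,x_t,y_t} ⊆ V(G) a set of 2t distinct vertices, 1 ≤ t ≤ n. Then V(G) can be partitioned into sets A and B with |A| = |B| = n, |A ∩ {x_i, y_i}| = 1 for each i, and |deg_A(v) − deg_B(v)| ≤ n^{2/3} for every vertex v, where deg_A(v) (resp. deg_B(v)) is the number of neighbors of v in A (resp. B). -/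
/-!
Pair up the vertices as `{x₁, y₁}, …, {x_t, y_t}` together with arbitrary further pairs, and put
exactly one vertex of each pair into `A`, the choice being encoded by a sign vector `ε ∈ {±1}ⁿ`.
For each vertex `v`, `deg_A v - deg_B v` is then a signed sum `∑ εᵢ cᵢ` with `|cᵢ| ≤ 1`; bounding
the exponential moment `∑_ε exp (s ∑ εᵢ cᵢ) ≤ (2 exp (s² / 2))ⁿ` shows that at most a fraction
`2 exp (-L² / 2n)` of the `2ⁿ` sign vectors make `|∑ εᵢ cᵢ| > L`. For `L = n^{2/3}` this fraction is
`2 exp (-n^{1/3} / 2)`, and a union bound over the `2n` vertices leaves a good sign vector as soon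
as `4n exp (-n^{1/3} / 2) < 1`.
-/

open Finset Real

lemma card_lt_le_exp_neg_mul_sum_exp {α : Type*} [Fintype α] (f : α → ℝ) (L : ℝ) {s : ℝ}
    (hs : 0 ≤ s) : (#{x | L < f x} : ℝ) ≤ exp (-(s * L)) * ∑ x, exp (s * f x) := by
  rw [natCast_card_filter, mul_sum]
  refine sum_le_sum fun x _ ↦ ?_
  split_ifs with h
  · rw [← exp_add, one_le_exp_iff]; nlinarith
  · positivity

section SignedSum

variable {ι : Type*} [Fintype ι]

def signedSum (ε : ι → Bool) (c : ι → ℝ) : ℝ := ∑ i, if ε i then c i else -c i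

lemma signedSum_neg (ε : ι → Bool) (c : ι → ℝ) : signedSum ε (-c) = -signedSum ε c := by
  rw [signedSum, signedSum, ← sum_neg_distrib]
  congr! 1 with i
  split_ifs <;> simp

variable [DecidableEq ι]

lemma sum_exp_mul_signedSum (c : ι → ℝ) (s : ℝ) :
    ∑ ε : ι → Bool, exp (s * signedSum ε c) = ∏ i, 2 * cosh (s * c i) := by
  set f : ι → Bool → ℝ := fun i b => exp (if b then s * c i else -(s * c i))
  calc ∑ ε : ι → Bool, exp (s * signedSum ε c) = ∑ ε : ι → Bool, ∏ i, f i (ε i) := by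
        congr! 1 with ε
        rw [signedSum, mul_sum, exp_sum]
        congr! 2 with i
        split_ifs <;> ring
    _ = ∏ i, ∑ b, f i b := (Fintype.prod_sum f).symm
    _ = ∏ i, 2 * cosh (s * c i) := by
        congr! 1 with i
        simp only [f, Fintype.sum_bool, if_true, Bool.false_eq_true, if_false, cosh_eq]
        ring

lemma sum_exp_mul_signedSum_le {c : ι → ℝ} (hc : ∀ i, |c i| ≤ 1) (s : ℝ) :
    ∑ ε : ι → Bool, exp (s * signedSum ε c) ≤ (2 * exp (s ^ 2 / 2)) ^ Fintype.card ι := by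
  rw [sum_exp_mul_signedSum, ← card_univ, ← prod_const]
  refine prod_le_prod (fun i _ ↦ by positivity) fun i _ ↦ ?_
  have hsq : (s * c i) ^ 2 ≤ s ^ 2 := by
    rw [mul_pow]
    exact mul_le_of_le_one_right (sq_nonneg s) ((sq_le_one_iff_abs_le_one _).2 (hc i))
  gcongr
  exact (cosh_le_exp_half_sq _).trans (exp_le_exp.2 (by linarith))


lemma card_lt_signedSum_le {c : ι → ℝ} (hc : ∀ i, |c i| ≤ 1) {L : ℝ} (hL : 0 ≤ L) :
    (#{ε | L < signedSum ε c} : ℝ) ≤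
      2 ^ Fintype.card ι * exp (-(L ^ 2 / (2 * Fintype.card ι))) := by
  set m : ℝ := (Fintype.card ι : ℝ)
  -- the exponential Markov bound, at the optimal parameter `s = L / m`
  have hs : 0 ≤ L / m := by positivity
  have hexp : -(L / m * L) + m * ((L / m) ^ 2 / 2) = -(L ^ 2 / (2 * m)) := by
    rcases eq_or_ne m 0 with hm | hm
    · simp [hm]
    · field_simp
      ring
  calc (#{ε | L < signedSum ε c} : ℝ)
      ≤ exp (-(L / m * L)) * ∑ ε : ι → Bool, exp (L / m * signedSum ε c) :=
        card_lt_le_exp_neg_mul_sum_exp _ L hs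
    _ ≤ exp (-(L / m * L)) * (2 * exp ((L / m) ^ 2 / 2)) ^ Fintype.card ι := by
        gcongr
        exact sum_exp_mul_signedSum_le hc _
    _ = 2 ^ Fintype.card ι * exp (-(L ^ 2 / (2 * m))) := by
        rw [mul_pow, ← exp_nat_mul, ← hexp, exp_add]
        ring

lemma card_lt_abs_signedSum_le {c : ι → ℝ} (hc : ∀ i, |c i| ≤ 1) {L : ℝ} (hL : 0 ≤ L) :
    (#{ε | L < |signedSum ε c|} : ℝ) ≤
      2 * (2 ^ Fintype.card ι * exp (-(L ^ 2 / (2 * Fintype.card ι)))) := by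
  have hc' : ∀ i, |(-c) i| ≤ 1 := fun i ↦ by simpa using hc i
  calc (#{ε | L < |signedSum ε c|} : ℝ)
      = #{ε | L < signedSum ε c ∨ L < signedSum ε (-c)} := by
        simp only [lt_abs, signedSum_neg]
    _ ≤ #{ε | L < signedSum ε c} + #{ε | L < signedSum ε (-c)} := by
        rw [filter_or]
        exact_mod_cast card_union_le _ _
    _ ≤ _ := by
        rw [two_mul]
        exact add_le_add (card_lt_signedSum_le hc hL) (card_lt_signedSum_le hc' hL)

lemma exists_forall_abs_signedSum_le {V : Type*} [Fintype V] {c : V → ι → ℝ}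
    (hc : ∀ v i, |c v i| ≤ 1) {L : ℝ} (hL : 0 ≤ L)
    (hsmall : 2 * Fintype.card V * exp (-(L ^ 2 / (2 * Fintype.card ι))) < 1) :
    ∃ ε : ι → Bool, ∀ v, |signedSum ε (c v)| ≤ L := by
  set bad : Finset (ι → Bool) := univ.biUnion fun v ↦ {ε | L < |signedSum ε (c v)|}
  have hbad : (#bad : ℝ) < #(univ : Finset (ι → Bool)) := calc
    (#bad : ℝ) ≤ ∑ v, (#{ε | L < |signedSum ε (c v)|} : ℝ) := by
        exact_mod_cast card_biUnion_le
    _ ≤ ∑ _v : V, 2 * (2 ^ Fintype.card ι * exp (-(L ^ 2 / (2 * Fintype.card ι)))) :=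
        sum_le_sum fun v _ ↦ card_lt_abs_signedSum_le (hc v) hL
    _ = 2 ^ Fintype.card ι * (2 * Fintype.card V * exp (-(L ^ 2 / (2 * Fintype.card ι)))) := by
        rw [sum_const, card_univ, nsmul_eq_mul]
        ring
    _ < #(univ : Finset (ι → Bool)) := by
        simpa using mul_lt_mul_of_pos_left hsmall (by positivity : (0 : ℝ) < 2 ^ Fintype.card ι)
  obtain ⟨ε, -, hε⟩ := exists_mem_notMem_of_card_lt_card (by exact_mod_cast hbad)
  exact ⟨ε, by simpa [bad] using hε⟩

end SignedSum

lemma exists_equiv_extend_of_injective {α β γ : Type*} [Fintype β] [Fintype γ]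
    (hcard : Fintype.card β = Fintype.card γ) {j : α → β} (hj : j.Injective) {f : α → γ}
    (hf : f.Injective) : ∃ e : β ≃ γ, ∀ a, e (j a) = f a := by
  classical
  obtain ⟨e₀⟩ : Nonempty (β ≃ γ) := Fintype.card_eq.mp hcard
  have hinj : Set.InjOn (Function.extend j f e₀) (Set.range j) := by
    rintro _ ⟨a, rfl⟩ _ ⟨a', rfl⟩ h
    simp only [hj.extend_apply] at h
    rw [hf h]
  obtain ⟨e, he⟩ := Set.MapsTo.exists_equiv_extend_of_card_eq (t := univ) (by simpa using hcard)
    (fun _ _ ↦ mem_coe.2 (mem_univ _)) hinj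
  refine ⟨e.trans (Equiv.subtypeUnivEquiv mem_univ), fun a ↦ ?_⟩
  simpa [hj.extend_apply] using he (j a) ⟨a, rfl⟩

lemma exists_boolProd_equiv_extend {V : Type*} [Fintype V] {n t : ℕ}
    (hV : Fintype.card V = 2 * n) (ht : t ≤ n) {x y : Fin t → V}
    (hxy : (Sum.elim x y).Injective) :
    ∃ e : Bool × Fin n ≃ V,
      ∀ i, e (false, Fin.castLE ht i) = x i ∧ e (true, Fin.castLE ht i) = y i := by
  obtain ⟨e, he⟩ := exists_equiv_extend_of_injective (by simp [hV, mul_comm])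
    (Function.injective_id.prodMap (Fin.castLE_injective ht))
    (hxy.comp (Equiv.boolProdEquivSum (Fin t)).injective)
  exact ⟨e, fun i ↦ ⟨he (false, i), he (true, i)⟩⟩

section PairSelection

variable {ι V : Type*} [Fintype V] (e : Bool × ι ≃ V) (ε : ι → Bool)

/-- `e` arranges `V` into the pairs `{e (false, i), e (true, i)}`, and `ε i` names the member of the
`i`-th pair that is selected. -/
def pairSelection : Finset V := {v | (e.symm v).1 = ε (e.symm v).2}

variable {e ε}

@[simp]
lemma mem_pairSelection {b : Bool} {i : ι} : e (b, i) ∈ pairSelection e ε ↔ b = ε i := by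
  simp [pairSelection]

variable [Fintype ι]

lemma card_pairSelection : #(pairSelection e ε) = Fintype.card ι := by
  classical
  have : pairSelection e ε = univ.image fun i ↦ e (ε i, i) := by
    ext v
    obtain ⟨⟨b, i⟩, rfl⟩ := e.surjective v
    simp [eq_comm]
  rw [this, card_image_of_injective _ fun i j h ↦ congrArg Prod.snd (e.injective h), card_univ]

lemma sum_pairSelection_sub_sum_compl [DecidableEq V] (h : V → ℝ) :
    ∑ w ∈ pairSelection e ε, h w - ∑ w ∈ (pairSelection e ε)ᶜ, h w =
      signedSum ε fun i ↦ h (e (true, i)) - h (e (false, i)) := by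
  calc ∑ w ∈ pairSelection e ε, h w - ∑ w ∈ (pairSelection e ε)ᶜ, h w
      = ∑ w, if w ∈ pairSelection e ε then h w else -h w := by
        rw [sum_ite, sum_neg_distrib, sub_eq_add_neg, filter_mem_eq_of_subset (subset_univ _)]
        congr 3
        ext w
        simp
    _ = ∑ p : Bool × ι, if p.1 = ε p.2 then h (e p) else -h (e p) := by
        refine Fintype.sum_equiv e.symm _ _ fun w ↦ ?_
        simp [pairSelection]
    _ = _ := by
        rw [Fintype.sum_prod_type_right, signedSum]
        refine sum_congr rfl fun i _ ↦ ?_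
        cases hi : ε i <;> simp [hi] <;> ring

end PairSelection

lemma four_mul_cube_mul_exp_neg_half_lt_one {p : ℝ} (hp : 128 ≤ p) :
    4 * p ^ 3 * exp (-(p / 2)) < 1 := by
  -- `(p / 2) ^ 5 / 5! = p ^ 5 / 3840`, which exceeds `4 p ^ 3` once `p ^ 2 > 15360`
  have h5 : (p / 2) ^ 5 / 120 ≤ exp (p / 2) := by
    simpa [Nat.factorial] using Real.pow_div_factorial_le_exp _ (by positivity : 0 ≤ p / 2) 5
  rw [exp_neg, ← div_eq_mul_inv, div_lt_one (exp_pos _)]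
  have : 0 < p ^ 3 * (p ^ 2 - 15360) := mul_pos (by positivity) (by nlinarith)
  nlinarith

/-- Shan's partition lemma: for sufficiently large `n`, any graph on `2n` vertices with
`2t` distinguished distinct vertices `x₁,y₁,…,x_t,y_t` (`1 ≤ t ≤ n`) admits a
partition `(A,B)` with `|A| = |B| = n`, splitting each pair `{x_i, y_i}`, and with
`|deg_A(v) − deg_B(v)| ≤ n^{2/3}` for every vertex `v`. -/
theorem partition_lemma :
    ∃ n₀ : ℕ, ∀ n : ℕ, n₀ ≤ n →
      ∀ (V : Type) [Fintype V] [DecidableEq V] (G : SimpleGraph V) [DecidableRel G.Adj],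
        Fintype.card V = 2 * n →
        ∀ (t : ℕ) (x y : Fin t → V), 1 ≤ t → t ≤ n →
          Function.Injective (Sum.elim x y) →
          ∃ A B : Finset V, Disjoint A B ∧ A ∪ B = Finset.univ ∧
            A.card = n ∧ B.card = n ∧
            (∀ i : Fin t, Xor' (x i ∈ A) (y i ∈ A)) ∧
            ∀ v : V,
              |((A.filter fun w => G.Adj v w).card : ℝ)
                - ((B.filter fun w => G.Adj v w).card : ℝ)| ≤ (n : ℝ) ^ ((2 : ℝ) / 3) := by
  refine ⟨128 ^ 3, fun n hn V _ _ G _ hV t x y _ htn hxy ↦ ?_⟩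
  obtain ⟨e, he⟩ := exists_boolProd_equiv_extend hV htn hxy
  set p : ℝ := (n : ℝ) ^ ((1 : ℝ) / 3)
  have hpow (k : ℕ) : (n : ℝ) ^ ((k : ℝ) / 3) = p ^ k := by
    rw [← rpow_natCast, ← rpow_mul (Nat.cast_nonneg n)]
    ring_nf
  have hn_eq : (n : ℝ) = p ^ 3 := by simpa using hpow 3
  have hp : 128 ≤ p :=
    le_of_pow_le_pow_left₀ three_ne_zero (by positivity) (by rw [← hn_eq]; exact_mod_cast hn)
  let adj (v w : V) : ℝ := if G.Adj v w then 1 else 0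
  obtain ⟨ε, hε⟩ := exists_forall_abs_signedSum_le
    (c := fun v i ↦ adj v (e (true, i)) - adj v (e (false, i)))
    (fun v i ↦ by simp only [adj]; split_ifs <;> norm_num) (sq_nonneg p) <| by
      have hexp : (p ^ 2) ^ 2 / (2 * p ^ 3) = p / 2 := by field_simp
      simp only [Fintype.card_fin, hV, Nat.cast_mul, Nat.cast_ofNat, hn_eq, hexp]
      linarith [four_mul_cube_mul_exp_neg_half_lt_one hp]
  set A := pairSelection e ε
  have hA : #A = n := by rw [card_pairSelection, Fintype.card_fin]
  refine ⟨A, Aᶜ, disjoint_compl_right, union_compl A, hA, by rw [card_compl, hA, hV]; omega,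
    fun i ↦ ?_, fun v ↦ ?_⟩
  · rw [← (he i).1, ← (he i).2, mem_pairSelection, mem_pairSelection]
    cases ε (Fin.castLE htn i)
    exacts [Or.inl ⟨rfl, Bool.noConfusion⟩, Or.inr ⟨rfl, Bool.noConfusion⟩]
  · rw [show (2 : ℝ) / 3 = (2 : ℕ) / 3 by norm_num, hpow, natCast_card_filter, natCast_card_filter,
      sum_pairSelection_sub_sum_compl]
    exact hε v
end

section
/- Let H be a simple hypergraph, φ a partial proper k-edge-coloring of H, and α, γ two distinct colors. Let P be the component, containing a given vertex v that misses α or γ, of the sub-hypergraph induced by edges colored α or γ. Then swapping colors α and γ on all edges of P yields a partial proper k-edge-coloring of H coloring exactly the same set of edges. -/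
/-- Swapping two colors `α, γ` on a maximal `(α,γ)`-chain `P` (the component,
containing a vertex `v` missing `α` or `γ`, of the sub-hypergraph of edges colored
`α` or `γ`) of a partial proper `k`-edge-coloring of a simple hypergraph `H` yields a
partial proper `k`-edge-coloring that colors exactly the same set of edges. -/
theorem kempe_chain_swap {V : Type*} [DecidableEq V]
    (H : Finset (Finset V)) (k : ℕ)
    (hrank : ∀ e ∈ H, 2 ≤ e.card)
    (hsimple : ∀ e ∈ H, ∀ f ∈ H, e ≠ f → (e ∩ f).card ≤ 1)
    (φ : Finset V → Option (Fin k))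
    (hproper : ∀ e ∈ H, ∀ f ∈ H, e ≠ f → (e ∩ f).Nonempty →
      ∀ i : Fin k, φ e = some i → φ f ≠ some i)
    (α γ : Fin k) (hαγ : α ≠ γ) (v : V)
    (hv : (∀ e ∈ H, v ∈ e → φ e ≠ some α) ∨ (∀ e ∈ H, v ∈ e → φ e ≠ some γ))
    (P : Finset (Finset V))
    (hP : ∀ e : Finset V, e ∈ P ↔
      (e ∈ H ∧ (φ e = some α ∨ φ e = some γ) ∧
        ∃ e₀ : Finset V, (e₀ ∈ H ∧ (φ e₀ = some α ∨ φ e₀ = some γ) ∧ v ∈ e₀) ∧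
          Relation.ReflTransGen
            (fun a b => a ∈ H ∧ b ∈ H ∧ (φ a = some α ∨ φ a = some γ) ∧
              (φ b = some α ∨ φ b = some γ) ∧ (a ∩ b).Nonempty) e₀ e))
    (ψ : Finset V → Option (Fin k))
    (hψ : ∀ e : Finset V, ψ e =
      if e ∈ P then (if φ e = some α then some γ else some α) else φ e) :
    (∀ e ∈ H, ∀ f ∈ H, e ≠ f → (e ∩ f).Nonempty →
      ∀ i : Fin k, ψ e = some i → ψ f ≠ some i) ∧
    (∀ e ∈ H, (ψ e = none ↔ φ e = none)) := by
  have hPmem : ∀ e ∈ P, e ∈ H ∧ (φ e = some α ∨ φ e = some γ) := by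
    intro e he
    obtain ⟨h1, h2, _⟩ := (hP e).1 he
    exact ⟨h1, h2⟩
  have hclosed : ∀ e ∈ P, ∀ f ∈ H, (φ f = some α ∨ φ f = some γ) →
      (e ∩ f).Nonempty → f ∈ P := by
    intro e he f hf hcf hef
    obtain ⟨heH, hce, e₀, h₀, hreach⟩ := (hP e).1 he
    exact (hP f).2 ⟨hf, hcf, e₀, h₀, hreach.tail ⟨heH, hf, hce, hcf, hef⟩⟩
  constructor
  · intro e he f hf hne hint i hψe hψf
    rw [hψ e] at hψe; rw [hψ f] at hψf
    by_cases heP : e ∈ P <;> by_cases hfP : f ∈ P <;>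
        simp only [heP, hfP, if_true, if_false, if_pos, if_neg] at hψe hψf
    · -- both in P
      obtain ⟨_, hce⟩ := hPmem e heP
      obtain ⟨_, hcf⟩ := hPmem f hfP
      have hne' : ∀ j : Fin k, φ e = some j → φ f ≠ some j :=
        fun j => hproper e he f hf hne hint j
      rcases hce with hce | hce <;> rcases hcf with hcf | hcf
      · exact hne' α hce hcf
      · rw [if_pos hce] at hψe
        rw [if_neg (by rw [hcf]; simp [hαγ.symm])] at hψf
        rw [← hψe] at hψf; exact hαγ (Option.some.inj hψf)
      · rw [if_neg (by rw [hce]; simp [hαγ.symm])] at hψe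
        rw [if_pos hcf] at hψf
        rw [← hψe] at hψf; exact hαγ.symm (Option.some.inj hψf)
      · exact hne' γ hce hcf
    · -- e ∈ P, f ∉ P
      have hcf : ¬(φ f = some α ∨ φ f = some γ) :=
        fun h => hfP (hclosed e heP f hf h hint)
      split_ifs at hψe with h
      · exact hcf (Or.inr (by rw [hψf, ← hψe]))
      · exact hcf (Or.inl (by rw [hψf, ← hψe]))
    · -- f ∈ P, e ∉ P
      have hint' : (f ∩ e).Nonempty := by rwa [Finset.inter_comm]
      have hce : ¬(φ e = some α ∨ φ e = some γ) :=
        fun h => heP (hclosed f hfP e he h hint')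
      split_ifs at hψf with h
      · exact hce (Or.inr (by rw [hψe, ← hψf]))
      · exact hce (Or.inl (by rw [hψe, ← hψf]))
    · exact hproper e he f hf hne hint i hψe hψf
  · intro e _
    rw [hψ e]
    by_cases heP : e ∈ P
    · obtain ⟨_, hce⟩ := hPmem e heP
      simp only [heP, if_true]
      constructor
      · intro h; split_ifs at h <;> simp at h
      · intro h; rcases hce with hce | hce <;> rw [hce] at h <;> simp at h
    · rw [if_neg heP]
end
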